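/- Let α ∈ K^sep with [K(α):K] = d, and suppose α lies in the valuation ring of K(α) with a := ν_{K(α)}(α) (a non-negative integer). Then db_K(α) ≥ (d − 1)(a − 1). -/

import Mathlib

open Polynomial Finset
open scoped Classical

/-! The valuation is Galois invariant, so every conjugate of `α` has valuation `a/d` and every
conjugate of `πL` has valuation `1/d`. As `v` is integral on `K`, the constant coefficient of the
minimal polynomial of `πL` has valuation `[K(πL):K]/d ∈ ℤ`, so `πL` generates `L` and
`αL = ∑_{i<d} cᵢ πL^i` with `cᵢ ∈ K`. The nonzero terms have valuations `v(cᵢ) + i/d`, pairwise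
distinct modulo `ℤ`, hence `v(cᵢ) + i/d ≥ a/d`. For embeddings `σ ≠ τ`,
`σαL - ταL = ∑ cᵢ (σπL^i - τπL^i)` and `σπL - τπL` divides `σπL^i - τπL^i` with a quotient of
valuation `≥ (i-1)/d`; so each of the `d(d-1)` ordered pairs contributes at least `(a-1)/d` to
the discriminant bonus. -/

namespace AddValuation

section Ring

variable {R Γ₀ : Type*} [Ring R] [LinearOrderedAddCommMonoidWithTop Γ₀] (v : AddValuation R Γ₀)

theorem map_sum_le_of_injOn {ι : Type*} {s : Finset ι} {f : ι → R}
    (hf : Set.InjOn (fun i => v (f i)) {i | i ∈ s ∧ v (f i) ≠ ⊤}) {i : ι} (hi : i ∈ s) :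
    v (∑ j ∈ s, f j) ≤ v (f i) := by
  obtain ⟨j, hj, hmin⟩ := s.exists_min_image (fun j => v (f j)) ⟨i, hi⟩
  by_cases htop : v (f j) = ⊤
  · simp [top_le_iff.1 (htop ▸ hmin i hi)]
  have hlt : ∀ k ∈ s.erase j, v (f j) < v (f k) := fun k hk =>
    (hmin k (mem_of_mem_erase hk)).lt_of_ne fun heq =>
      ne_of_mem_erase hk (hf ⟨mem_of_mem_erase hk, heq ▸ htop⟩ ⟨hj, htop⟩ heq.symm)
  rw [← add_sum_erase s f hj, v.map_add_eq_of_lt_left (v.map_lt_sum htop hlt)]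
  exact hmin i hi

theorem le_map_sum_add {ι : Type*} {s : Finset ι} {f : ι → R} {g c : Γ₀}
    (hf : ∀ i ∈ s, g ≤ v (f i) + c) : g ≤ v (∑ i ∈ s, f i) + c := by
  rcases s.eq_empty_or_nonempty with rfl | hs
  · simp
  obtain ⟨j, hj, hmin⟩ := s.exists_min_image (fun j => v (f j)) hs
  exact (hf j hj).trans (by gcongr; exact v.map_le_sum hmin)

end Ring

section CommRing

variable {R Γ₀ : Type*} [CommRing R] [LinearOrderedAddCommMonoidWithTop Γ₀]
  (v : AddValuation R Γ₀)

theorem map_multiset_prod (s : Multiset R) : v s.prod = (s.map v).sum := by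
  induction s using Multiset.induction_on with
  | empty => simp
  | cons a s ih => simp [ih]

theorem map_sub_add_nsmul_le_map_pow_sub_pow {x y : R} {e : Γ₀} (hx : v x = e) (hy : v y = e) :
    ∀ n : ℕ, v (x - y) + n • e ≤ v (x ^ n - y ^ n) + e
  | 0 => by simp
  | m + 1 => by
    have hsum : m • e ≤ v (∑ j ∈ range (m + 1), x ^ j * y ^ (m + 1 - 1 - j)) := by
      refine v.map_le_sum fun j hj => ?_
      rw [map_mul, map_pow, map_pow, hx, hy, ← add_nsmul]
      rw [Nat.add_sub_cancel, Nat.add_sub_cancel' (Nat.lt_succ_iff.1 (mem_range.1 hj))]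
    rw [← geom_sum₂_mul, map_mul, succ_nsmul, add_comm (v _) (v (x - y)), add_assoc]
    gcongr

end CommRing

section Conjugates

variable {K F Γ₀ : Type*} [Field K] [Field F] [Algebra K F] [Normal K F]
  [LinearOrderedAddCommMonoidWithTop Γ₀] {v : AddValuation F Γ₀}

theorem map_eq_of_isConjRoot (hv : ∀ (σ : F ≃ₐ[K] F) (x : F), v (σ x) = v x) {x y : F}
    (h : IsConjRoot K x y) : v x = v y := by
  obtain ⟨σ, rfl⟩ := h.exists_algEquiv
  exact hv σ y

theorem map_algHom_eq_map_algHom (hv : ∀ (σ : F ≃ₐ[K] F) (x : F), v (σ x) = v x)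
    {L : Type*} [Field L] [Algebra K L] (σ τ : L →ₐ[K] F) (x : L) : v (σ x) = v (τ x) :=
  map_eq_of_isConjRoot hv <| by
    rw [isConjRoot_def, minpoly.algHom_eq σ σ.injective, minpoly.algHom_eq τ τ.injective]

theorem map_le_map_sub (hv : ∀ (σ : F ≃ₐ[K] F) (x : F), v (σ x) = v x)
    {L : Type*} [Field L] [Algebra K L] (ι σ τ : L →ₐ[K] F) (x : L) :
    v (ι x) ≤ v (σ x - τ x) := by
  rw [sub_eq_add_neg]
  refine v.map_le_add ?_ ?_
  · rw [map_algHom_eq_map_algHom hv ι σ]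
  · rw [map_neg, map_algHom_eq_map_algHom hv ι τ]

theorem map_algebraMap_minpoly_coeff_zero (hv : ∀ (σ : F ≃ₐ[K] F) (x : F), v (σ x) = v x)
    (x : F) : v (algebraMap K F ((minpoly K x).coeff 0)) = (minpoly K x).natDegree • v x := by
  have hx : IsIntegral K x := Algebra.IsIntegral.isIntegral x
  have hsplits := Normal.splits' (F := K) x
  have hroots : ∀ r ∈ (minpoly K x).aroots F, v r = v x := fun r hr =>
    (map_eq_of_isConjRoot hv ((isConjRoot_iff_mem_minpoly_aroots hx).2 hr)).symm
  rw [← coeff_map, hsplits.coeff_zero_eq_prod_roots_of_monic ((minpoly.monic hx).map _),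
    map_mul, map_pow, map_neg, map_one, nsmul_zero, zero_add, map_multiset_prod,
    Multiset.map_congr rfl hroots, Multiset.map_const', Multiset.sum_replicate,
    ← hsplits.natDegree_eq_card_roots, natDegree_map]

end Conjugates

section OfNonzero

variable {F : Type*} [Field F] (v : F → ℚ)

/-- The hypotheses only constrain `v` on nonzero elements; its junk value at `0` is replaced
by `⊤`. -/
noncomputable def ofNonzero (hv_mul : ∀ x y : F, x ≠ 0 → y ≠ 0 → v (x * y) = v x + v y)
    (hv_add : ∀ x y : F, x ≠ 0 → y ≠ 0 → x + y ≠ 0 → min (v x) (v y) ≤ v (x + y)) :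
    AddValuation F (WithTop ℚ) :=
  AddValuation.of (fun x => if x = 0 then ⊤ else (v x : WithTop ℚ)) (if_pos rfl)
    (by
      have h := hv_mul 1 1 one_ne_zero one_ne_zero
      rw [mul_one, left_eq_add] at h
      simp [h])
    (fun x y => by
      rcases eq_or_ne x 0 with rfl | hx; · simp
      rcases eq_or_ne y 0 with rfl | hy; · simp
      rcases eq_or_ne (x + y) 0 with hxy | hxy; · simp [hxy]
      simp only [hx, hy, hxy, if_false]
      exact_mod_cast hv_add x y hx hy hxy)
    (fun x y => by
      rcases eq_or_ne x 0 with rfl | hx; · simp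
      rcases eq_or_ne y 0 with rfl | hy; · simp
      simp [hx, hy, hv_mul x y hx hy])

variable {v} {hv_mul : ∀ x y : F, x ≠ 0 → y ≠ 0 → v (x * y) = v x + v y}
  {hv_add : ∀ x y : F, x ≠ 0 → y ≠ 0 → x + y ≠ 0 → min (v x) (v y) ≤ v (x + y)}

theorem ofNonzero_apply {x : F} (hx : x ≠ 0) : ofNonzero v hv_mul hv_add x = v x := by
  simp [ofNonzero, hx]

variable {K : Type*} [Field K] [Algebra K F]

theorem ofNonzero_map_algEquiv (hv_gal : ∀ (σ : F ≃ₐ[K] F) (x : F), v (σ x) = v x)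
    (σ : F ≃ₐ[K] F) (x : F) : ofNonzero v hv_mul hv_add (σ x) = ofNonzero v hv_mul hv_add x := by
  rcases eq_or_ne x 0 with rfl | hx
  · simp
  rw [ofNonzero_apply hx, ofNonzero_apply (by simpa using hx), hv_gal]

theorem exists_ofNonzero_algebraMap_eq_intCast
    (hv_int : ∀ c : K, c ≠ 0 → ∃ n : ℤ, v (algebraMap K F c) = (n : ℚ)) {c : K} (hc : c ≠ 0) :
    ∃ n : ℤ, ofNonzero v hv_mul hv_add (algebraMap K F c) = ((n : ℚ) : WithTop ℚ) := by
  obtain ⟨n, hn⟩ := hv_int c hc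
  exact ⟨n, by rw [ofNonzero_apply ((_root_.map_ne_zero _).2 hc), hn]⟩

end OfNonzero

end AddValuation

theorem eq_of_intCast_add_div_eq {d i j : ℕ} (hi : i < d) (hj : j < d) {m n : ℤ}
    (h : (m : ℚ) + i / d = n + j / d) : i = j := by
  have hd : (0 : ℚ) < d := by exact_mod_cast i.zero_le.trans_lt hi
  have hfract : ∀ (k : ℕ) (l : ℤ), k < d → Int.fract ((l : ℚ) + k / d) = k / d := fun k l hk => by
    rw [Int.fract_intCast_add, Int.fract_eq_self]
    exact ⟨by positivity, (div_lt_one hd).2 (by exact_mod_cast hk)⟩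
  have := congrArg Int.fract h
  rw [hfract i m hi, hfract j n hj, div_left_inj' hd.ne'] at this
  exact_mod_cast this

theorem PowerBasis.algHom_apply_eq_sum {R S A : Type*} [CommRing R] [Ring S] [Semiring A]
    [Algebra R S] [Algebra R A] (pb : PowerBasis R S) (σ : S →ₐ[R] A) (x : S) :
    σ x = ∑ i : Fin pb.dim, algebraMap R A (pb.basis.repr x i) * σ pb.gen ^ (i : ℕ) := by
  conv_lhs => rw [← pb.basis.sum_repr x]
  simp [map_sum, pb.basis_eq_pow, Algebra.smul_def]

namespace AddValuation

variable {K F L : Type*} [Field K] [Field F] [Field L] [Algebra K F] [Algebra K L]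
  {w : AddValuation F (WithTop ℚ)}

theorem adjoin_eq_top_of_map_eq_one_div_finrank [Normal K F] [FiniteDimensional K L]
    (hgal : ∀ (σ : F ≃ₐ[K] F) (x : F), w (σ x) = w x)
    (hint : ∀ c : K, c ≠ 0 → ∃ n : ℤ, w (algebraMap K F c) = ((n : ℚ) : WithTop ℚ))
    (ι : L →ₐ[K] F) {π : L} (hπ : w (ι π) = ((1 / Module.finrank K L : ℚ) : WithTop ℚ)) :
    Algebra.adjoin K {π} = ⊤ := by
  have hπint := IsIntegral.of_finite K π
  have hπ0 : π ≠ 0 := by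
    rintro rfl
    simp at hπ
  have hcoeff := map_algebraMap_minpoly_coeff_zero hgal (ι π)
  rw [minpoly.algHom_eq ι ι.injective, hπ] at hcoeff
  obtain ⟨n, hn⟩ := hint _ (minpoly.coeff_zero_ne_zero hπint hπ0)
  have hd : (0 : ℚ) < Module.finrank K L := by exact_mod_cast Module.finrank_pos
  have hdvd : ((Module.finrank K L * n : ℤ) : ℚ) = (minpoly K π).natDegree := by
    rw [hcoeff, ← WithTop.coe_nsmul, WithTop.coe_inj, nsmul_eq_mul] at hn
    rw [Int.cast_mul, ← hn]
    push_cast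
    field_simp
  have hdeg : (minpoly K π).natDegree = Module.finrank K L :=
    le_antisymm (minpoly.natDegree_le π) (Nat.le_of_dvd (minpoly.natDegree_pos hπint)
      (Int.natCast_dvd_natCast.1 ⟨n, by exact_mod_cast hdvd.symm⟩))
  exact Algebra.adjoin_eq_top_of_primitive_element hπint.isAlgebraic
    ((Field.primitive_element_iff_minpoly_natDegree_eq K π).2 hdeg)

theorem map_le_map_repr_add_nsmul
    (hint : ∀ c : K, c ≠ 0 → ∃ n : ℤ, w (algebraMap K F c) = ((n : ℚ) : WithTop ℚ))
    (ι : L →ₐ[K] F) (pb : PowerBasis K L)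
    (hgen : w (ι pb.gen) = ((1 / Module.finrank K L : ℚ) : WithTop ℚ)) (x : L) (i : Fin pb.dim) :
    w (ι x) ≤ w (algebraMap K F (pb.basis.repr x i)) + (i : ℕ) • w (ι pb.gen) := by
  set f : Fin pb.dim → F := fun j => algebraMap K F (pb.basis.repr x j) * ι pb.gen ^ (j : ℕ)
  have hterm : ∀ j, w (f j) ≠ ⊤ →
      ∃ n : ℤ, w (f j) = (((n : ℚ) + (j : ℕ) / pb.dim : ℚ) : WithTop ℚ) := by
    intro j hj
    have hc : pb.basis.repr x j ≠ 0 := by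
      intro hc
      simp [f, hc] at hj
    obtain ⟨n, hn⟩ := hint _ hc
    refine ⟨n, ?_⟩
    rw [map_mul, map_pow, hn, hgen, pb.finrank]
    norm_cast
    rw [nsmul_eq_mul, div_eq_mul_one_div (j : ℚ)]
  have hinj : Set.InjOn (fun j => w (f j)) {j | j ∈ univ ∧ w (f j) ≠ ⊤} := by
    rintro j ⟨-, hj⟩ k ⟨-, hk⟩ hjk
    obtain ⟨m, hm⟩ := hterm j hj
    obtain ⟨n, hn⟩ := hterm k hk
    simp only [hm, hn, WithTop.coe_inj] at hjk
    exact Fin.ext (eq_of_intCast_add_div_eq j.isLt k.isLt hjk)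
  have := map_sum_le_of_injOn w hinj (mem_univ i)
  rwa [← pb.algHom_apply_eq_sum ι x, map_mul, map_pow] at this

theorem map_add_map_sub_le [Normal K F] (hgal : ∀ (σ : F ≃ₐ[K] F) (x : F), w (σ x) = w x)
    (hint : ∀ c : K, c ≠ 0 → ∃ n : ℤ, w (algebraMap K F c) = ((n : ℚ) : WithTop ℚ))
    (ι σ τ : L →ₐ[K] F) (pb : PowerBasis K L)
    (hgen : w (ι pb.gen) = ((1 / Module.finrank K L : ℚ) : WithTop ℚ)) (x : L) :
    w (ι x) + w (σ pb.gen - τ pb.gen) ≤ w (σ x - τ x) + w (ι pb.gen) := by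
  have hσ := map_algHom_eq_map_algHom hgal σ ι pb.gen
  have hτ := map_algHom_eq_map_algHom hgal τ ι pb.gen
  rw [pb.algHom_apply_eq_sum σ x, pb.algHom_apply_eq_sum τ x, ← sum_sub_distrib]
  refine w.le_map_sum_add fun i _ => ?_
  rw [← mul_sub, map_mul, add_assoc]
  calc w (ι x) + w (σ pb.gen - τ pb.gen)
      ≤ w (algebraMap K F (pb.basis.repr x i)) + (i : ℕ) • w (ι pb.gen)
        + w (σ pb.gen - τ pb.gen) := by
        gcongr
        exact map_le_map_repr_add_nsmul hint ι pb hgen x i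
    _ ≤ _ := by
        rw [add_assoc, add_comm ((i : ℕ) • _)]
        gcongr _ + ?_
        exact map_sub_add_nsmul_le_map_pow_sub_pow w hσ hτ i

end AddValuation

theorem discriminant_bonus_pair_ge {K Kbar L : Type*} [Field K] [Field Kbar] [Algebra K Kbar]
    [Normal K Kbar] [Field L] [Algebra K L] [FiniteDimensional K L] (v : Kbar → ℚ)
    (hv_mul : ∀ x y : Kbar, x ≠ 0 → y ≠ 0 → v (x * y) = v x + v y)
    (hv_add : ∀ x y : Kbar, x ≠ 0 → y ≠ 0 → x + y ≠ 0 → min (v x) (v y) ≤ v (x + y))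
    (hv_gal : ∀ (σ : Kbar ≃ₐ[K] Kbar) (x : Kbar), v (σ x) = v x)
    (hv_int : ∀ x : K, x ≠ 0 → ∃ n : ℤ, v (algebraMap K Kbar x) = (n : ℚ))
    (ι σ τ : L →ₐ[K] Kbar) {αL πL : L} (hα : σ αL ≠ τ αL) {a : ℕ}
    (ha : (Module.finrank K L : ℚ) * v (ι αL) = a)
    (hπL : (Module.finrank K L : ℚ) * v (ι πL) = 1) :
    ((a : ℚ) - 1) / Module.finrank K L ≤ v (σ αL - τ αL) - v (σ πL - τ πL) := by
  set w := AddValuation.ofNonzero v hv_mul hv_add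
  have hgal : ∀ (σ : Kbar ≃ₐ[K] Kbar) (x : Kbar), w (σ x) = w x :=
    AddValuation.ofNonzero_map_algEquiv hv_gal
  have hint : ∀ c : K, c ≠ 0 → ∃ n : ℤ, w (algebraMap K Kbar c) = ((n : ℚ) : WithTop ℚ) :=
    fun _ => AddValuation.exists_ofNonzero_algebraMap_eq_intCast hv_int
  have hd : (0 : ℚ) < Module.finrank K L := by exact_mod_cast Module.finrank_pos
  have hαL : ι αL ≠ 0 := fun h => hα (by simp [(map_eq_zero_iff ι ι.injective).1 h])
  have hδα : σ αL - τ αL ≠ 0 := sub_ne_zero.2 hα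
  have hbonus : ((a : ℚ) - 1) / Module.finrank K L = v (ι αL) - v (ι πL) := by
    rw [← ha, ← hπL]
    field_simp
  rcases eq_or_ne πL 0 with rfl | hπ0
  · -- `πL = 0` is not excluded: then `hπL` pins the junk value `v 0`.
    have h := AddValuation.map_le_map_sub hgal ι σ τ αL
    rw [AddValuation.ofNonzero_apply hδα, AddValuation.ofNonzero_apply hαL,
      WithTop.coe_le_coe] at h
    simp only [map_zero, sub_zero] at hbonus ⊢
    linarith
  have hιπ : ι πL ≠ 0 := (map_ne_zero_iff ι ι.injective).2 hπ0
  have hπ : w (ι πL) = ((1 / Module.finrank K L : ℚ) : WithTop ℚ) := by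
    rw [AddValuation.ofNonzero_apply hιπ, WithTop.coe_inj, eq_div_iff hd.ne', mul_comm, hπL]
  let pb := PowerBasis.ofAdjoinEqTop (IsIntegral.of_finite K πL)
    (AddValuation.adjoin_eq_top_of_map_eq_one_div_finrank hgal hint ι hπ)
  have hδπ : σ πL - τ πL ≠ 0 := sub_ne_zero.2 fun h => hα (by rw [pb.algHom_ext h])
  have h := AddValuation.map_add_map_sub_le hgal hint ι σ τ pb hπ αL
  simp only [pb, PowerBasis.ofAdjoinEqTop_gen] at h
  rw [AddValuation.ofNonzero_apply hαL, AddValuation.ofNonzero_apply hδπ,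
    AddValuation.ofNonzero_apply hδα, AddValuation.ofNonzero_apply hιπ, ← WithTop.coe_add,
    ← WithTop.coe_add, WithTop.coe_le_coe] at h
  linarith

theorem discriminant_bonus_ge_general
    {K Kbar : Type*} [Field K] [Field Kbar] [Algebra K Kbar] [IsAlgClosure K Kbar]
    (v : Kbar → ℚ)
    (hv_mul : ∀ x y : Kbar, x ≠ 0 → y ≠ 0 → v (x * y) = v x + v y)
    (hv_add : ∀ x y : Kbar, x ≠ 0 → y ≠ 0 → x + y ≠ 0 → min (v x) (v y) ≤ v (x + y))
    (hv_gal : ∀ (σ : Kbar ≃ₐ[K] Kbar) (x : Kbar), v (σ x) = v x)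
    (hv_int : ∀ x : K, x ≠ 0 → ∃ n : ℤ, v (algebraMap K Kbar x) = (n : ℚ))
    (α : Kbar) (hsep : (minpoly K α).Separable)
    (L : Type*) [Field L] [Algebra K L] [FiniteDimensional K L]
    (ιL : L →ₐ[K] Kbar)
    (αL : L) (hαL : ιL αL = α) (hgen : Algebra.adjoin K {αL} = ⊤)
    (d : ℕ) (hd : Module.finrank K L = d)
    (a : ℕ) (ha : (d : ℚ) * v α = (a : ℚ))
    (πL : L) (hπL : (d : ℚ) * v (ιL πL) = 1) :
    ((d : ℚ) - 1) * ((a : ℚ) - 1) ≤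
      (∑ p ∈ (univ : Finset ((L →ₐ[K] Kbar) × (L →ₐ[K] Kbar))).filter
          (fun p => p.1 ≠ p.2), v (p.1 αL - p.2 αL))
      - (∑ p ∈ (univ : Finset ((L →ₐ[K] Kbar) × (L →ₐ[K] Kbar))).filter
          (fun p => p.1 ≠ p.2), v (p.1 πL - p.2 πL)) := by
  subst hd hαL
  have := IsAlgClosure.isAlgClosed K (K := Kbar)
  let pbα := PowerBasis.ofAdjoinEqTop (IsIntegral.of_finite K αL) hgen
  have hsepα : IsSeparable K pbα.gen := by
    rwa [PowerBasis.ofAdjoinEqTop_gen, IsSeparable, ← minpoly.algHom_eq ιL ιL.injective]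
  have hcard : Nat.card (L →ₐ[K] Kbar) = Module.finrank K L := by
    rw [AlgHom.natCard_of_powerBasis pbα hsepα (IsAlgClosed.splits _), pbα.finrank]
  have hpairs : #((univ : Finset ((L →ₐ[K] Kbar) × (L →ₐ[K] Kbar))).filter fun p => p.1 ≠ p.2)
      = Module.finrank K L * Module.finrank K L - Module.finrank K L := by
    rw [← hcard, Nat.card_eq_fintype_card, ← card_univ, ← offDiag_card]
    congr 1
    ext p
    simp
  rw [← sum_sub_distrib]
  refine le_trans ?_ (card_nsmul_le_sum _ _ _ fun p hp =>
    discriminant_bonus_pair_ge v hv_mul hv_add hv_gal hv_int ιL p.1 p.2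
      (fun h => (mem_filter.1 hp).2 (pbα.algHom_ext h)) ha hπL)
  rw [hpairs, nsmul_eq_mul, Nat.cast_sub (Nat.le_mul_self _)]
  have hd : (Module.finrank K L : ℚ) ≠ 0 := by exact_mod_cast Module.finrank_pos.ne'
  refine le_of_eq ?_
  push_cast
  field_simp

/-- Let `K` be a field, Henselian with respect to a discrete valuation
`ν_K` with algebraically closed residue field, with fixed algebraic closure `Kbar` and
(unique, Galois-invariant) extension `v` of `ν_K`, normalized so that a uniformizer
`πK` satisfies `v πK = 1` and `v` is `ℤ`-valued on `K`; algebraic closedness of the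
residue field is expressed by `hv_res`.

Let `α ∈ K^sep` with `[K(α):K] = d` (realized by an abstract field `L = K(α)` with
`K`-embedding `ιL : L → Kbar` and generator `αL ↦ α`), and suppose `α` lies in the
valuation ring of `K(α)` with `a := ν_{K(α)}(α)` a non-negative integer
(`ν_{K(α)} = [L:K]·ν`).  Then `db_K(α) ≥ (d − 1)(a − 1)`, where
`db_K(α) := Σ_{σ≠τ ∈ Hom_K(L,Kbar)} ν(σ(α) − τ(α)) − Σ_{σ≠τ} ν(σ(π_L) − τ(π_L))`
for a uniformizer `π_L` of `L`. -/
theorem discriminant_bonus_ge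
    {K Kbar : Type*} [Field K] [Field Kbar] [Algebra K Kbar] [IsAlgClosure K Kbar]
    (v : Kbar → ℚ)
    (hv_mul : ∀ x y : Kbar, x ≠ 0 → y ≠ 0 → v (x * y) = v x + v y)
    (hv_add : ∀ x y : Kbar, x ≠ 0 → y ≠ 0 → x + y ≠ 0 → min (v x) (v y) ≤ v (x + y))
    (hv_gal : ∀ (σ : Kbar ≃ₐ[K] Kbar) (x : Kbar), v (σ x) = v x)
    (hv_int : ∀ x : K, x ≠ 0 → ∃ n : ℤ, v (algebraMap K Kbar x) = (n : ℚ))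
    (πK : K) (hπK : πK ≠ 0 ∧ v (algebraMap K Kbar πK) = 1)
    (hv_res : ∀ x : Kbar, x ≠ 0 → 0 ≤ v x →
      ∃ η : K, x = algebraMap K Kbar η ∨ 0 < v (x - algebraMap K Kbar η))
    (α : Kbar) (hα0 : α ≠ 0) (hsep : (minpoly K α).Separable)
    (L : Type*) [Field L] [Algebra K L] [FiniteDimensional K L]
    (ιL : L →ₐ[K] Kbar)
    (αL : L) (hαL : ιL αL = α) (hgen : Algebra.adjoin K {αL} = ⊤)
    (d : ℕ) (hd : Module.finrank K L = d)
    (a : ℕ) (ha : (d : ℚ) * v α = (a : ℚ))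
    (πL : L) (hπL : (d : ℚ) * v (ιL πL) = 1) :
    ((d : ℚ) - 1) * ((a : ℚ) - 1) ≤
      (∑ p ∈ (univ : Finset ((L →ₐ[K] Kbar) × (L →ₐ[K] Kbar))).filter
          (fun p => p.1 ≠ p.2), v (p.1 αL - p.2 αL))
      - (∑ p ∈ (univ : Finset ((L →ₐ[K] Kbar) × (L →ₐ[K] Kbar))).filter
          (fun p => p.1 ≠ p.2), v (p.1 πL - p.2 πL)) :=
  discriminant_bonus_ge_general v hv_mul hv_add hv_gal hv_int α hsep L ιL αL hαL hgen d hd a ha πL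
    hπL
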